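/- Let G be a C₅-free graph and let H be the subgraph of G induced by a maximum strong clique of G. If H is triangle-free and G is E(H)-minimal, then G is bipartite. -/

import Mathlib

/-- `S` is a strong clique of the subgraph `H` of `G`: all edges of `S` are edges of `H`,
and every pair of edges of `S` either shares an endpoint or is joined by an edge of `H`. -/
def IsStrongCliqueOn {V : Type*} {G : SimpleGraph V} (H : G.Subgraph) (S : Set (Sym2 V)) : Prop :=
  S ⊆ H.edgeSet ∧
    ∀ e ∈ S, ∀ f ∈ S, ∃ a b, a ∈ e ∧ b ∈ f ∧ (a = b ∨ H.Adj a b)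

/-- A strong clique of `G` itself. -/
def IsStrongClique {V : Type*} (G : SimpleGraph V) (S : Set (Sym2 V)) : Prop :=
  S ⊆ G.edgeSet ∧
    ∀ e ∈ S, ∀ f ∈ S, ∃ a b, a ∈ e ∧ b ∈ f ∧ (a = b ∨ G.Adj a b)

/-- `G` is `S`-minimal: `S` is a strong clique of `G`, and `S` is not a strong clique of
any proper subgraph of `G` (i.e. the only subgraph of `G` for which `S` is a strong clique
is `G` itself). -/
def IsMinimalFor {V : Type*} (G : SimpleGraph V) (S : Set (Sym2 V)) : Prop :=
  IsStrongCliqueOn (⊤ : G.Subgraph) S ∧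
    ∀ H : G.Subgraph, IsStrongCliqueOn H S → H = ⊤

/-- `G` contains no cycle of length `n`. -/
def CycleFree {V : Type*} (G : SimpleGraph V) (n : ℕ) : Prop :=
  ∀ (v : V) (c : G.Walk v v), c.IsCycle → c.length ≠ n

/-!
Minimality of `G` puts every vertex on an edge of `S`, and since any two edges of `S` are joined,
`G` has diameter at most 3. For an edge `xy ∉ S`, minimality provides disjoint edges `xa`, `yb` of
`S` that need `xy` to be joined, and maximality of `S` an edge `cd ∈ S` with no vertex equal or
adjacent to `x` or `y`; as there is no `C₅`, this closes a hexagon `x a c d b y`. Hexagons rule out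
triangles and induced `C₇`s. In a graph of diameter at most 3, an edge between two vertices at the
same distance from a root closes a triangle, a `C₅` or an induced `C₇`, so the parity of that
distance is a proper 2-colouring.
-/

open SimpleGraph

lemma CycleFree.false_of_pentagon {V : Type*} {G : SimpleGraph V} (hG : CycleFree G 5)
    {v₀ v₁ v₂ v₃ v₄ : V} (h₀₁ : G.Adj v₀ v₁) (h₁₂ : G.Adj v₁ v₂) (h₂₃ : G.Adj v₂ v₃)
    (h₃₄ : G.Adj v₃ v₄) (h₄₀ : G.Adj v₄ v₀)
    (n₀₂ : v₀ ≠ v₂) (n₀₃ : v₀ ≠ v₃) (n₁₃ : v₁ ≠ v₃) (n₁₄ : v₁ ≠ v₄) (n₂₄ : v₂ ≠ v₄) : False := by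
  have := h₀₁.ne; have := h₁₂.ne; have := h₂₃.ne; have := h₃₄.ne; have := h₄₀.ne
  refine hG v₀ (.cons h₀₁ (.cons h₁₂ (.cons h₂₃ (.cons h₃₄ (.cons h₄₀ .nil))))) ?_ rfl
  simp only [Walk.cons_isCycle_iff, Walk.isPath_def, Walk.support_cons, Walk.support_nil,
    Walk.edges_cons, Walk.edges_nil, List.nodup_cons, List.mem_cons, List.not_mem_nil, Sym2.eq_iff]
  grind

namespace SimpleGraph

variable {V : Type*} {G : SimpleGraph V}

lemma CliqueFree.false_of_triangle (h3 : G.CliqueFree 3) {a b c : V} (hab : G.Adj a b)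
    (hbc : G.Adj b c) (hac : G.Adj a c) : False := by
  classical exact h3 {a, b, c} (is3Clique_triple_iff.2 ⟨hab, hac, hbc⟩)

lemma colorable_two_of_forall_adj_dist_ne (r : V)
    (h : ∀ u v, G.Adj u v → G.dist r u ≠ G.dist r v) : G.Colorable 2 :=
  ⟨.mk (fun v => ⟨G.dist r v % 2, Nat.mod_lt _ two_pos⟩) fun {u v} huv heq => by
    have := huv.diff_dist_adj (u := r)
    have := h u v huv
    simp only [Fin.mk.injEq] at heq
    omega⟩

lemma exists_adj_dist_eq_of_dist_eq_add_one {r u : V} {k : ℕ} (h : G.dist r u = k + 1) :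
    ∃ x, G.Adj x u ∧ G.dist r x = k := by
  obtain ⟨p, hp⟩ := exists_walk_of_dist_ne_zero (u := u) (v := r) (by rw [dist_comm, h]; omega)
  rw [dist_comm, h] at hp
  cases p with
  | nil => simp at hp
  | @cons _ x _ hux q =>
    have hq : G.dist r x ≤ k := by
      rw [dist_comm]
      exact (dist_le q).trans (by simp only [Walk.length_cons] at hp; omega)
    have := hux.symm.diff_dist_adj (u := r)
    exact ⟨x, hux.symm, by omega⟩

lemma injective_of_forall_adj_iff_cycleGraph_seven {w : Fin 7 → V}
    (hw : ∀ i j, G.Adj (w i) (w j) ↔ (cycleGraph 7).Adj i j) : Function.Injective w := by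
  intro i j hij
  have : ∀ k, (cycleGraph 7).Adj i k ↔ (cycleGraph 7).Adj j k := fun k => by
    rw [← hw, ← hw, hij]
  clear hij
  revert i j
  decide

lemma cycleGraph_seven_isIndContained_of_dist_eq_three (h3 : G.CliqueFree 3)
    (h5 : CycleFree G 5) {r u v : V} (hu : G.dist r u = 3) (hv : G.dist r v = 3)
    (huv : G.Adj u v) : cycleGraph 7 ⊴ G := by
  obtain ⟨x₂, hx₂, dx₂⟩ := exists_adj_dist_eq_of_dist_eq_add_one hu
  obtain ⟨y₂, hy₂, dy₂⟩ := exists_adj_dist_eq_of_dist_eq_add_one hv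
  obtain ⟨x₁, hx₁, dx₁⟩ := exists_adj_dist_eq_of_dist_eq_add_one dx₂
  obtain ⟨y₁, hy₁, dy₁⟩ := exists_adj_dist_eq_of_dist_eq_add_one dy₂
  have hx₀ : G.Adj r x₁ := dist_eq_one_iff_adj.1 dx₁
  have hy₀ : G.Adj r y₁ := dist_eq_one_iff_adj.1 dy₁
  have dr : G.dist r r = 0 := dist_self
  have sep {p q : V} (h : G.dist r p ≠ G.dist r q) : p ≠ q := fun e => h (e ▸ rfl)
  have far {p q : V} (h : G.dist r p + 2 ≤ G.dist r q) : ¬G.Adj p q := fun e => by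
    have := e.diff_dist_adj (u := r); omega
  have nx₂y₂ : x₂ ≠ y₂ := by rintro rfl; exact h3.false_of_triangle hx₂ huv hy₂
  have ax₁y₂ : ¬G.Adj x₁ y₂ := fun h =>
    h5.false_of_pentagon hx₁ hx₂ huv hy₂.symm h.symm (sep (by omega)) (sep (by omega))
      (sep (by omega)) nx₂y₂ (sep (by omega))
  have ax₂y₁ : ¬G.Adj x₂ y₁ := fun h =>
    h5.false_of_pentagon hy₁ hy₂ huv.symm hx₂.symm h (sep (by omega)) (sep (by omega))
      (sep (by omega)) nx₂y₂.symm (sep (by omega))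
  have nx₁y₁ : x₁ ≠ y₁ := by rintro rfl; exact ax₁y₂ hy₁
  have ax₁y₁ : ¬G.Adj x₁ y₁ := fun h => h3.false_of_triangle hx₀ h hy₀
  have ax₂y₂ : ¬G.Adj x₂ y₂ := fun h =>
    h5.false_of_pentagon hx₀ hx₁ h hy₁.symm hy₀.symm (sep (by omega)) (sep (by omega))
      (sep (by omega)) nx₁y₁ (sep (by omega))
  have ax₂v : ¬G.Adj x₂ v := fun h => h3.false_of_triangle hx₂ huv h
  have auy₂ : ¬G.Adj u y₂ := fun h => h3.false_of_triangle huv hy₂.symm h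
  have hw : ∀ i j, G.Adj (![r, x₁, x₂, u, v, y₂, y₁] i) (![r, x₁, x₂, u, v, y₂, y₁] j) ↔
      (cycleGraph 7).Adj i j := by
    intro i j
    fin_cases i <;> fin_cases j <;> simp +decide <;>
      first
      | assumption | exact .symm ‹_› | exact fun h : G.Adj _ _ => ‹¬G.Adj _ _› h.symm
      | (refine far ?_; omega) | (refine fun h => far ?_ h.symm; omega)
  exact ⟨⟨⟨_, injective_of_forall_adj_iff_cycleGraph_seven hw⟩, hw _ _⟩⟩

theorem colorable_two_of_ediam_le_three (h3 : G.CliqueFree 3) (h5 : CycleFree G 5)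
    (h7 : ¬cycleGraph 7 ⊴ G) (hdiam : G.ediam ≤ 3) : G.Colorable 2 := by
  rcases isEmpty_or_nonempty V with _ | ⟨⟨r⟩⟩
  · exact .of_isEmpty 2
  refine colorable_two_of_forall_adj_dist_ne r fun u v huv hd => ?_
  have hreach : G.Reachable r u :=
    preconnected_of_ediam_ne_top (ne_top_of_le_ne_top (by simp) hdiam) r u
  have hu : G.dist r u ≤ 3 := ENat.toNat_le_of_le_natCast (edist_le_ediam.trans hdiam)
  obtain h | h | h | h : G.dist r u = 0 ∨ G.dist r u = 1 ∨ G.dist r u = 2 ∨ G.dist r u = 3 := by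
    omega
  · have hru := hreach.dist_eq_zero_iff.1 h
    have hrv := (hreach.trans huv.reachable).dist_eq_zero_iff.1 (hd ▸ h)
    exact huv.ne (hru.symm.trans hrv)
  · exact h3.false_of_triangle (dist_eq_one_iff_adj.1 h) huv (dist_eq_one_iff_adj.1 (hd ▸ h))
  · obtain ⟨x, hx, dx⟩ := exists_adj_dist_eq_of_dist_eq_add_one h
    obtain ⟨y, hy, dy⟩ := exists_adj_dist_eq_of_dist_eq_add_one (hd ▸ h)
    have sep {p q : V} (h : G.dist r p ≠ G.dist r q) : p ≠ q := fun e => h (e ▸ rfl)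
    rcases eq_or_ne x y with rfl | hxy
    · exact h3.false_of_triangle hx huv hy
    · exact h5.false_of_pentagon (dist_eq_one_iff_adj.1 dx) hx huv hy.symm
        (dist_eq_one_iff_adj.1 dy).symm (sep (by simp [h])) (sep (by simp [← hd, h]))
        (sep (by omega)) hxy (sep (by omega))
  · exact h7 (cycleGraph_seven_isIndContained_of_dist_eq_three h3 h5 h (hd ▸ h) huv)

end SimpleGraph

section StrongClique

variable {V : Type*} {G : SimpleGraph V} {S : Set (Sym2 V)}

lemma IsStrongClique.adj (hS : IsStrongClique G S) {x y : V} (h : s(x, y) ∈ S) : G.Adj x y :=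
  hS.1 h

lemma IsStrongClique.adj_of_compl_adj (hS : IsStrongClique G S) {x a c d : V}
    (hxa : s(x, a) ∈ S) (hcd : s(c, d) ∈ S) (hxc : Gᶜ.Adj x c) (hxd : Gᶜ.Adj x d) :
    G.Adj a c ∨ G.Adj a d := by
  have hax : G.Adj a x := (hS.adj hxa).symm
  obtain ⟨p, q, hp, hq, hpq⟩ := hS.2 _ hxa _ hcd
  rw [Sym2.mem_iff] at hp hq
  rcases hp with rfl | rfl <;> rcases hq with rfl | rfl <;> rcases hpq with rfl | h
  · exact absurd rfl hxc.ne
  · exact absurd h hxc.2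
  · exact absurd rfl hxd.ne
  · exact absurd h hxd.2
  · exact absurd hax.symm hxc.2
  · exact .inl h
  · exact absurd hax.symm hxd.2
  · exact .inr h

lemma IsMinimalFor.isStrongClique (hmin : IsMinimalFor G S) : IsStrongClique G S := by
  simpa [IsStrongCliqueOn, IsStrongClique] using hmin.1

lemma IsMinimalFor.exists_mk_mem (hmin : IsMinimalFor G S) (v : V) : ∃ t, s(v, t) ∈ S := by
  let H := (⊤ : G.Subgraph).induce {u | ∃ e ∈ S, u ∈ e}
  have hH : IsStrongCliqueOn H S := by
    refine ⟨fun e he => ?_, fun e he f hf => ?_⟩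
    · induction e using Sym2.ind with
      | h u w => exact ⟨⟨_, he, Sym2.mem_mk_left u w⟩, ⟨_, he, Sym2.mem_mk_right u w⟩, hmin.1.1 he⟩
    · obtain ⟨a, b, ha, hb, hab⟩ := hmin.1.2 e he f hf
      exact ⟨a, b, ha, hb, hab.imp_right fun h => ⟨⟨e, he, ha⟩, ⟨f, hf, hb⟩, h⟩⟩
  have hv : v ∈ H.verts := by rw [hmin.2 H hH]; trivial
  obtain ⟨e, he, hve⟩ := hv
  obtain ⟨t, rfl⟩ := Sym2.mem_iff_exists.1 hve
  exact ⟨t, he⟩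

lemma IsMinimalFor.mem_or_exists_of_adj (hmin : IsMinimalFor G S) {x y : V} (hxy : G.Adj x y) :
    s(x, y) ∈ S ∨ ∃ a b, s(x, a) ∈ S ∧ s(y, b) ∈ S ∧ x ≠ b ∧ a ≠ y ∧ a ≠ b := by
  by_contra! ⟨hxyS, hcon⟩
  have meet {e f : Sym2 V} (he : e ∈ S) (hf : f ∈ S) (hxe : x ∈ e) (hyf : y ∈ f) :
      ∃ p, p ∈ e ∧ p ∈ f := by
    obtain ⟨a, rfl⟩ := Sym2.mem_iff_exists.1 hxe
    obtain ⟨b, rfl⟩ := Sym2.mem_iff_exists.1 hyf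
    by_cases hxb : x = b
    · exact ⟨x, Sym2.mem_mk_left x a, hxb ▸ Sym2.mem_mk_right y b⟩
    by_cases hay : a = y
    · exact ⟨y, hay ▸ Sym2.mem_mk_right x a, Sym2.mem_mk_left y b⟩
    exact ⟨a, Sym2.mem_mk_right x a, hcon a b he hf hxb hay ▸ Sym2.mem_mk_right y b⟩
  let H := (⊤ : G.Subgraph).deleteEdges {s(x, y)}
  have hH : IsStrongCliqueOn H S := by
    refine ⟨fun e he => ?_, fun e he f hf => ?_⟩
    · induction e using Sym2.ind with
      | h u w => exact (Subgraph.deleteEdges_adj _ u w).2 ⟨hmin.1.1 he, fun h => hxyS (h ▸ he)⟩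
    obtain ⟨p, q, hp, hq, hpq | hpq⟩ := hmin.1.2 e he f hf
    · exact ⟨p, q, hp, hq, .inl hpq⟩
    by_cases hpqxy : s(p, q) = s(x, y)
    · rcases Sym2.eq_iff.1 hpqxy with ⟨rfl, rfl⟩ | ⟨rfl, rfl⟩
      · obtain ⟨r, hre, hrf⟩ := meet he hf hp hq
        exact ⟨r, r, hre, hrf, .inl rfl⟩
      · obtain ⟨r, hrf, hre⟩ := meet hf he hq hp
        exact ⟨r, r, hre, hrf, .inl rfl⟩
    · exact ⟨p, q, hp, hq, .inr (by simpa [H, hpqxy] using hpq)⟩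
  have hHxy : H.Adj x y := (hmin.2 H hH).symm ▸ hxy
  simp [H] at hHxy

lemma IsMinimalFor.ediam_le_three (hmin : IsMinimalFor G S) : G.ediam ≤ 3 := by
  have hS := hmin.isStrongClique
  have near {e : Sym2 V} (he : e ∈ S) {u p : V} (hu : u ∈ e) (hp : p ∈ e) : G.edist u p ≤ 1 := by
    rw [edist_le_one_iff_adj_or_eq]
    obtain ⟨v, rfl⟩ := Sym2.mem_iff_exists.1 hu
    rcases Sym2.mem_iff.1 hp with rfl | rfl
    · exact .inr rfl
    · exact .inl (hS.adj he)
  refine ediam_le_of_edist_le fun u v => ?_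
  obtain ⟨s, hs⟩ := hmin.exists_mk_mem u
  obtain ⟨t, ht⟩ := hmin.exists_mk_mem v
  obtain ⟨p, q, hp, hq, hpq⟩ := hS.2 _ hs _ ht
  calc G.edist u v ≤ G.edist u q + G.edist q v := G.edist_triangle
    _ ≤ G.edist u p + G.edist p q + G.edist q v := by gcongr; exact G.edist_triangle
    _ ≤ 1 + 1 + 1 := by
        gcongr
        · exact near hs (Sym2.mem_mk_left u s) hp
        · exact edist_le_one_iff_adj_or_eq.2 hpq.symm
        · rw [edist_comm]; exact near ht (Sym2.mem_mk_left v t) hq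
    _ = 3 := by norm_num

/-- The hexagon `x a c d b y` that minimality of `G` and maximality of `S` attach to an edge
`xy ∉ S`. -/
structure Hexagon (G : SimpleGraph V) (S : Set (Sym2 V)) (x y a b c d : V) : Prop where
  mem_xa : s(x, a) ∈ S
  mem_yb : s(y, b) ∈ S
  mem_cd : s(c, d) ∈ S
  adj_ac : G.Adj a c
  adj_bd : G.Adj b d
  compl_ad : Gᶜ.Adj a d
  compl_bc : Gᶜ.Adj b c
  compl_xc : Gᶜ.Adj x c
  compl_xd : Gᶜ.Adj x d
  compl_yc : Gᶜ.Adj y c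
  compl_yd : Gᶜ.Adj y d
  ne_xb : x ≠ b
  ne_ya : y ≠ a
  ne_ab : a ≠ b

variable {x y a b c d : V}

lemma Hexagon.symm (h : Hexagon G S x y a b c d) : Hexagon G S y x b a d c where
  mem_xa := h.mem_yb
  mem_yb := h.mem_xa
  mem_cd := Sym2.eq_swap ▸ h.mem_cd
  adj_ac := h.adj_bd
  adj_bd := h.adj_ac
  compl_ad := h.compl_bc
  compl_bc := h.compl_ad
  compl_xc := h.compl_yd
  compl_xd := h.compl_yc
  compl_yc := h.compl_xd
  compl_yd := h.compl_xc
  ne_xb := h.ne_ya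
  ne_ya := h.ne_xb
  ne_ab := h.ne_ab.symm

lemma Hexagon.compl_adj_of_adj_of_adj (h : Hexagon G S x y a b c d) (hS : IsStrongClique G S)
    (hG : CycleFree G 5) {v : V} (hvx : G.Adj v x) (hvy : G.Adj v y) :
    Gᶜ.Adj v c ∧ Gᶜ.Adj v d := by
  have key {x y a b c d : V} (h : Hexagon G S x y a b c d) (hvx : G.Adj v x)
      (hvy : G.Adj v y) : Gᶜ.Adj v c :=
    ⟨G.ne_of_adj_of_not_adj hvx fun hcx => h.compl_xc.2 hcx.symm, fun hvc =>
      hG.false_of_pentagon hvc (hS.adj h.mem_cd) h.adj_bd.symm (hS.adj h.mem_yb).symm hvy.symm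
        (G.ne_of_adj_of_not_adj hvx fun hdx => h.compl_xd.2 hdx.symm)
        (G.ne_of_adj_of_not_adj hvc h.compl_bc.2) h.compl_bc.ne.symm h.compl_yc.ne.symm
        h.compl_yd.ne.symm⟩
  exact ⟨key h hvx hvy, key h.symm hvy hvx⟩

lemma Hexagon.adj_of_heptagon {w : Fin 7 → V} {t : V}
    (h : Hexagon G S (w 0) (w 1) a b c d) (hS : IsStrongClique G S) (hG : CycleFree G 5)
    (hw : ∀ i j, G.Adj (w i) (w j) ↔ (cycleGraph 7).Adj i j) (ht : s(w 4, t) ∈ S) :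
    G.Adj t a := by
  have A (i j : Fin 7) (hij : (cycleGraph 7).Adj i j := by decide) : G.Adj (w i) (w j) :=
    (hw i j).2 hij
  have N (i j : Fin 7) (hij : ¬(cycleGraph 7).Adj i j := by decide) : ¬G.Adj (w i) (w j) :=
    (hw i j).not.2 hij
  have ne (i j : Fin 7) (hij : i ≠ j := by decide) : w i ≠ w j :=
    (injective_of_forall_adj_iff_cycleGraph_seven hw).ne hij
  have hwa := hS.adj h.mem_xa
  have hw4t := hS.adj ht
  have naw : ¬G.Adj a (w 4) := fun haw =>
    hG.false_of_pentagon hwa haw (A 4 5) (A 5 6) (A 6 0) (ne 0 4) (ne 0 5)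
      (G.ne_of_adj_of_not_adj hwa.symm (N 5 0)) (G.ne_of_adj_of_not_adj haw (N 6 4)) (ne 4 6)
  have hfar : Gᶜ.Adj (w 4) a :=
    ⟨(G.ne_of_adj_of_not_adj hwa.symm (N 4 0)).symm, fun h => naw h.symm⟩
  refine (hS.adj_of_compl_adj ht h.mem_xa ⟨ne 4 0, N 4 0⟩ hfar).resolve_left fun htw => ?_
  exact hG.false_of_pentagon hw4t htw (A 0 6) (A 6 5) (A 5 4) (ne 4 0) (ne 4 6)
    (G.ne_of_adj_of_not_adj hw4t.symm (N 6 4)) (G.ne_of_adj_of_not_adj htw (N 5 0)) (ne 0 5)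

end StrongClique

section MaximumStrongClique

variable {V : Type*} {G : SimpleGraph V} {S : Finset (Sym2 V)}

lemma IsStrongClique.exists_compl_adj_of_notMem (hS : IsStrongClique G ↑S)
    (hmax : ∀ T : Finset (Sym2 V), IsStrongClique G ↑T → T.card ≤ S.card) {x y : V}
    (hxy : G.Adj x y) (hxyS : s(x, y) ∉ S) :
    ∃ c d, s(c, d) ∈ S ∧ Gᶜ.Adj x c ∧ Gᶜ.Adj x d ∧ Gᶜ.Adj y c ∧ Gᶜ.Adj y d := by
  classical
  obtain ⟨f, hf, hfar⟩ : ∃ f ∈ S, ¬∃ a b, a ∈ s(x, y) ∧ b ∈ f ∧ (a = b ∨ G.Adj a b) := by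
    by_contra! hjoin
    have hT : IsStrongClique G ↑(insert s(x, y) S) := by
      rw [Finset.coe_insert]
      refine ⟨Set.insert_subset hxy hS.1, ?_⟩
      rintro e (rfl | he) f (rfl | hf)
      · exact ⟨x, x, Sym2.mem_mk_left x y, Sym2.mem_mk_left x y, .inl rfl⟩
      · exact hjoin f hf
      · obtain ⟨a, b, ha, hb, hab⟩ := hjoin e he
        exact ⟨b, a, hb, ha, hab.imp Eq.symm Adj.symm⟩
      · exact hS.2 e he f hf
    have := hmax _ hT
    rw [Finset.card_insert_of_notMem hxyS] at this
    omega
  induction f using Sym2.ind with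
  | h c d =>
    refine ⟨c, d, hf, ?_⟩
    simp only [Sym2.mem_iff, compl_adj] at hfar ⊢
    grind

lemma IsMinimalFor.exists_hexagon (hmin : IsMinimalFor G ↑S)
    (hmax : ∀ T : Finset (Sym2 V), IsStrongClique G ↑T → T.card ≤ S.card) (hG : CycleFree G 5)
    {x y : V} (hxy : G.Adj x y) (hxyS : s(x, y) ∉ S) : ∃ a b c d, Hexagon G ↑S x y a b c d := by
  have hS := hmin.isStrongClique
  obtain h | ⟨a, b, hxa, hyb, hxb, hay, hab⟩ := hmin.mem_or_exists_of_adj hxy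
  · exact absurd h hxyS
  obtain ⟨c, d, hcd, hxc, hxd, hyc, hyd⟩ := hS.exists_compl_adj_of_notMem hmax hxy hxyS
  have no_common {e : V} (hae : G.Adj a e) (hbe : G.Adj b e) (hxe : Gᶜ.Adj x e)
      (hye : Gᶜ.Adj y e) : False :=
    hG.false_of_pentagon (hS.adj hxa) hae hbe.symm (hS.adj hyb).symm hxy.symm hxe.ne hxb hab hay
      hye.ne.symm
  have ne_of {p q e : V} (hpq : s(p, q) ∈ S) (hpe : Gᶜ.Adj p e) : q ≠ e :=
    G.ne_of_adj_of_not_adj (hS.adj hpq).symm fun h => hpe.2 h.symm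
  rcases hS.adj_of_compl_adj hxa hcd hxc hxd with hac | had <;>
    rcases hS.adj_of_compl_adj hyb hcd hyc hyd with hbc | hbd
  · exact (no_common hac hbc hxc hyc).elim
  · exact ⟨a, b, c, d, hxa, hyb, hcd, hac, hbd,
      ⟨ne_of hxa hxd, fun had => no_common had hbd hxd hyd⟩,
      ⟨ne_of hyb hyc, fun hbc => no_common hac hbc hxc hyc⟩, hxc, hxd, hyc, hyd, hxb, hay.symm, hab⟩
  · exact ⟨a, b, d, c, hxa, hyb, Sym2.eq_swap ▸ hcd, had, hbc,
      ⟨ne_of hxa hxc, fun hac => no_common hac hbc hxc hyc⟩,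
      ⟨ne_of hyb hyd, fun hbd => no_common had hbd hxd hyd⟩, hxd, hxc, hyd, hyc, hxb, hay.symm, hab⟩
  · exact (no_common had hbd hxd hyd).elim

lemma IsMinimalFor.not_adj_of_mem_of_mem (hmin : IsMinimalFor G ↑S)
    (hmax : ∀ T : Finset (Sym2 V), IsStrongClique G ↑T → T.card ≤ S.card) (hG : CycleFree G 5)
    (htri : ¬∃ a b c : V, a ≠ b ∧ b ≠ c ∧ a ≠ c ∧ s(a, b) ∈ S ∧ s(b, c) ∈ S ∧ s(a, c) ∈ S)
    {x y z : V} (hxy : s(x, y) ∈ S) (hyz : s(y, z) ∈ S) : ¬G.Adj x z := by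
  intro hxz
  have hS := hmin.isStrongClique
  have hyx := (hS.adj hxy).symm
  have hyz' := hS.adj hyz
  obtain ⟨a, b, c, d, h⟩ := hmin.exists_hexagon hmax hG hxz fun hxzS =>
    htri ⟨x, y, z, hyx.ne.symm, hyz'.ne, hxz.ne, hxy, hyz, hxzS⟩
  obtain ⟨hyc, hyd⟩ := h.compl_adj_of_adj_of_adj hS hG hyx hyz'
  exact (hS.adj_of_compl_adj hxy h.mem_cd h.compl_xc h.compl_xd).elim hyc.2 hyd.2

lemma IsMinimalFor.false_of_triangle_of_notMem (hmin : IsMinimalFor G ↑S)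
    (hmax : ∀ T : Finset (Sym2 V), IsStrongClique G ↑T → T.card ≤ S.card) (hG : CycleFree G 5)
    (htri : ¬∃ a b c : V, a ≠ b ∧ b ≠ c ∧ a ≠ c ∧ s(a, b) ∈ S ∧ s(b, c) ∈ S ∧ s(a, c) ∈ S)
    {x y z : V} (hxy : G.Adj x y) (hyz : G.Adj y z) (hxz : G.Adj x z) (hxyS : s(x, y) ∉ S) :
    False := by
  have hS := hmin.isStrongClique
  obtain ⟨a, b, c, d, h⟩ := hmin.exists_hexagon hmax hG hxy hxyS
  obtain ⟨hzc, hzd⟩ := h.compl_adj_of_adj_of_adj hS hG hxz.symm hyz.symm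
  obtain ⟨t, hzt⟩ := hmin.exists_mk_mem z
  have key {x y a b c d : V} (h : Hexagon G S x y a b c d) (hzx : G.Adj z x)
      (hzc : Gᶜ.Adj z c) (htc : G.Adj t c) : False :=
    hG.false_of_pentagon (hS.adj hzt) htc h.adj_ac.symm (hS.adj h.mem_xa).symm hzx.symm hzc.ne
      (G.ne_of_adj_of_not_adj h.adj_ac hzc.2).symm
      (fun hta => hmin.not_adj_of_mem_of_mem hmax hG htri h.mem_xa
        (Sym2.eq_swap ▸ hta ▸ hzt) hzx.symm)
      (G.ne_of_adj_of_not_adj htc h.compl_xc.2) h.compl_xc.ne.symm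
  rcases hS.adj_of_compl_adj hzt h.mem_cd hzc hzd with htc | htd
  · exact key h hxz.symm hzc htc
  · exact key h.symm hyz.symm hzd htd

theorem IsMinimalFor.cliqueFree_three (hmin : IsMinimalFor G ↑S)
    (hmax : ∀ T : Finset (Sym2 V), IsStrongClique G ↑T → T.card ≤ S.card) (hG : CycleFree G 5)
    (htri : ¬∃ a b c : V, a ≠ b ∧ b ≠ c ∧ a ≠ c ∧ s(a, b) ∈ S ∧ s(b, c) ∈ S ∧ s(a, c) ∈ S) :
    G.CliqueFree 3 := by
  classical
  intro K hK
  obtain ⟨x, y, z, hxy, hxz, hyz, -⟩ := is3Clique_iff.1 hK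
  by_cases hxyS : s(x, y) ∈ S
  · by_cases hyzS : s(y, z) ∈ S
    · exact hmin.not_adj_of_mem_of_mem hmax hG htri hxyS hyzS hxz
    · exact hmin.false_of_triangle_of_notMem hmax hG htri hyz hxz.symm hxy.symm hyzS
  · exact hmin.false_of_triangle_of_notMem hmax hG htri hxy hyz hxz hxyS

lemma IsMinimalFor.false_of_heptagon_of_notMem (hmin : IsMinimalFor G ↑S)
    (hmax : ∀ T : Finset (Sym2 V), IsStrongClique G ↑T → T.card ≤ S.card) (hG : CycleFree G 5)
    {w : Fin 7 → V} (hw : ∀ i j, G.Adj (w i) (w j) ↔ (cycleGraph 7).Adj i j)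
    (h01 : s(w 0, w 1) ∉ S) : False := by
  have hS := hmin.isStrongClique
  obtain ⟨a, b, c, d, h⟩ := hmin.exists_hexagon hmax hG ((hw 0 1).2 (by decide)) h01
  obtain ⟨t, ht⟩ := hmin.exists_mk_mem (w 4)
  have hta := h.adj_of_heptagon hS hG hw ht
  -- the reflection `i ↦ 1 - i` of the cycle swaps `w 0` and `w 1` and fixes `w 4`
  have htb := h.symm.adj_of_heptagon (w := fun i => w (1 - i)) hS hG
    (fun i j => (hw _ _).trans (by revert i j; decide)) ht
  exact hG.false_of_pentagon hta h.adj_ac (hS.adj h.mem_cd) h.adj_bd.symm htb.symm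
    (G.ne_of_adj_of_not_adj htb fun hcb => h.compl_bc.2 hcb.symm)
    (G.ne_of_adj_of_not_adj hta fun hda => h.compl_ad.2 hda.symm)
    h.compl_ad.ne h.ne_ab h.compl_bc.ne.symm

theorem IsMinimalFor.not_cycleGraph_seven_isIndContained (hmin : IsMinimalFor G ↑S)
    (hmax : ∀ T : Finset (Sym2 V), IsStrongClique G ↑T → T.card ≤ S.card)
    (hG : CycleFree G 5) : ¬cycleGraph 7 ⊴ G := by
  rintro ⟨f⟩
  have hw (i j : Fin 7) : G.Adj (f i) (f j) ↔ (cycleGraph 7).Adj i j := f.map_adj_iff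
  by_cases h01 : s(f 0, f 1) ∈ S
  · -- the cycle edges `f 0 f 1` and `f 3 f 4` are not joined, so they are not both in `S`
    by_cases h34 : s(f 3, f 4) ∈ S
    · obtain ⟨p, q, hp, hq, hpq⟩ := hmin.isStrongClique.2 _ h01 _ h34
      rw [Sym2.mem_iff] at hp hq
      rcases hp with rfl | rfl <;> rcases hq with rfl | rfl <;> rcases hpq with h | h <;>
        first
        | exact absurd (f.injective h) (by decide)
        | exact absurd ((hw _ _).1 h) (by decide)
    · exact hmin.false_of_heptagon_of_notMem hmax hG (w := fun i => f (i + 3))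
        (fun i j => (hw _ _).trans (by revert i j; decide)) h34
  · exact hmin.false_of_heptagon_of_notMem hmax hG hw h01

end MaximumStrongClique

theorem stmt10_general {V : Type*} (G : SimpleGraph V)
    (hc5 : CycleFree G 5)
    (S : Finset (Sym2 V))
    (hmax : ∀ T : Finset (Sym2 V), IsStrongClique G ↑T → T.card ≤ S.card)
    (htrifree : ¬ ∃ a b c : V, a ≠ b ∧ b ≠ c ∧ a ≠ c ∧
      s(a, b) ∈ S ∧ s(b, c) ∈ S ∧ s(a, c) ∈ S)
    (hmin : IsMinimalFor G ↑S) :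
    G.Colorable 2 :=
  colorable_two_of_ediam_le_three (hmin.cliqueFree_three hmax hc5 htrifree) hc5
    (hmin.not_cycleGraph_seven_isIndContained hmax hc5) hmin.ediam_le_three

/-- Let `G` be a `C₅`-free graph and `S` a maximum strong clique of `G`, so that `H`, the
subgraph induced by `S`, has edge set `S`. If `H` is triangle-free (no three edges of `S`
form a triangle) and `G` is `E(H)`-minimal, then `G` is bipartite. -/
theorem stmt10 {V : Type*} [Fintype V] [DecidableEq V] (G : SimpleGraph V)
    (hc5 : CycleFree G 5)
    (S : Finset (Sym2 V))
    (hmax : ∀ T : Finset (Sym2 V), IsStrongClique G ↑T → T.card ≤ S.card)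
    (hSsc : IsStrongClique G ↑S)
    (htrifree : ¬ ∃ a b c : V, a ≠ b ∧ b ≠ c ∧ a ≠ c ∧
      s(a, b) ∈ S ∧ s(b, c) ∈ S ∧ s(a, c) ∈ S)
    (hmin : IsMinimalFor G ↑S) :
    G.Colorable 2 :=
  stmt10_general G hc5 S hmax htrifree hmin
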